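/- If g : [0,1] → [0,1] is continuous and I₀, I₁, …, Iₘ is a finite sequence of closed subintervals such that Iᵢ₊₁ ⊆ g(Iᵢ) for all i < m and I₀ ⊆ Iₘ, then there exists x ∈ I₀ with gᵐ(x) = x and gⁱ(x) ∈ Iᵢ for all i ≤ m. -/

import Mathlib

/-!
Pull the chain of coverings back to `I₀`: by induction one finds a closed interval `J ⊆ I₀` with
`gⁱ(J) ⊆ Iᵢ` for `i ≤ m` and `gᵐ(J) = Iₘ`, refining at each step with the exact covering lemma
(if `g(I) ⊇ K` for closed intervals then some closed subinterval of `I` is mapped *onto* `K`).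
Then `J ⊆ I₀ ⊆ Iₘ = gᵐ(J)`, and the intermediate value theorem gives a fixed point of `gᵐ` in `J`.
-/

open Set OrderDual

section ExactCover

variable {α δ : Type*} [ConditionallyCompleteLinearOrder α] [TopologicalSpace α] [OrderTopology α]
  [LinearOrder δ] [TopologicalSpace δ] [OrderClosedTopology δ]
  {f : α → δ} {p q : α} {c d : δ}

theorem isCompact_Icc_inter_preimage_singleton (hf : ContinuousOn f (Icc p q)) (c : δ) :
    IsCompact (Icc p q ∩ f ⁻¹' {c}) :=
  isCompact_Icc.of_isClosed_subset
    (hf.preimage_isClosed_of_isClosed isClosed_Icc isClosed_singleton) inter_subset_left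

variable [DenselyOrdered α]

theorem image_Icc_eq_Icc_of_forall_eq_imp (hpq : p ≤ q) (hf : ContinuousOn f (Icc p q))
    (hcd : c ≤ d) (hp : f p = c) (hq : f q = d) (hc : ∀ x ∈ Icc p q, f x = c → x = p)
    (hd : ∀ x ∈ Icc p q, f x = d → x = q) : f '' Icc p q = Icc c d := by
  refine Subset.antisymm ?_ (hp ▸ hq ▸ intermediate_value_Icc hpq hf)
  rintro _ ⟨x, hx, rfl⟩
  refine ⟨le_of_not_gt fun hxc => ?_, le_of_not_gt fun hxd => ?_⟩
  · obtain ⟨y, hy, hyc⟩ := intermediate_value_Icc hx.2 (hf.mono (Icc_subset_Icc_left hx.1))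
      ⟨hxc.le, hq ▸ hcd⟩
    have hxp : x = p := le_antisymm (hy.1.trans (hc y ⟨hx.1.trans hy.1, hy.2⟩ hyc).le) hx.1
    exact hxc.ne (hxp ▸ hp)
  · obtain ⟨y, hy, hyd⟩ := intermediate_value_Icc hx.1 (hf.mono (Icc_subset_Icc_right hx.2))
      ⟨hp ▸ hcd, hxd.le⟩
    have hxq : x = q := le_antisymm hx.2 ((hd y ⟨hy.1, hy.2.trans hx.2⟩ hyd).ge.trans hy.2)
    exact hxd.ne' (hxq ▸ hq)

/-- The subinterval runs from the last visit to `c` before the first visit to `d`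
up to that first visit. -/
theorem exists_Icc_subset_image_eq_of_map_eq (hpq : p ≤ q) (hf : ContinuousOn f (Icc p q))
    (hcd : c ≤ d) (hp : f p = c) (hq : f q = d) :
    ∃ p' q', p' ≤ q' ∧ Icc p' q' ⊆ Icc p q ∧ f '' Icc p' q' = Icc c d := by
  obtain ⟨q', ⟨⟨hpq', hq'q⟩, hq'd⟩, hq'_least⟩ :=
    (isCompact_Icc_inter_preimage_singleton hf d).exists_isLeast ⟨q, right_mem_Icc.2 hpq, hq⟩
  have hf' : ContinuousOn f (Icc p q') := hf.mono (Icc_subset_Icc_right hq'q)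
  obtain ⟨p', ⟨⟨hpp', hp'q'⟩, hp'c⟩, hp'_greatest⟩ :=
    (isCompact_Icc_inter_preimage_singleton hf' c).exists_isGreatest
      ⟨p, left_mem_Icc.2 hpq', hp⟩
  refine ⟨p', q', hp'q', Icc_subset_Icc hpp' hq'q, ?_⟩
  refine image_Icc_eq_Icc_of_forall_eq_imp hp'q' (hf'.mono (Icc_subset_Icc_left hpp')) hcd
    hp'c hq'd (fun x hx hxc => ?_) (fun x hx hxd => ?_)
  · exact le_antisymm (hp'_greatest ⟨⟨hpp'.trans hx.1, hx.2⟩, hxc⟩) hx.1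
  · exact le_antisymm hx.2 (hq'_least ⟨⟨hpp'.trans hx.1, hx.2.trans hq'q⟩, hxd⟩)

theorem exists_Icc_subset_image_eq (hf : ContinuousOn f (Icc p q)) (hcd : c ≤ d)
    (hcov : Icc c d ⊆ f '' Icc p q) :
    ∃ p' q', p' ≤ q' ∧ Icc p' q' ⊆ Icc p q ∧ f '' Icc p' q' = Icc c d := by
  obtain ⟨s, hs, hsc⟩ := hcov (left_mem_Icc.2 hcd)
  obtain ⟨t, ht, htd⟩ := hcov (right_mem_Icc.2 hcd)
  rcases le_total s t with hst | hts
  · obtain ⟨p', q', hpq', hsub, himage⟩ := exists_Icc_subset_image_eq_of_map_eq hst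
      (hf.mono (Icc_subset_Icc hs.1 ht.2)) hcd hsc htd
    exact ⟨p', q', hpq', hsub.trans (Icc_subset_Icc hs.1 ht.2), himage⟩
  · obtain ⟨p', q', hpq', hsub, himage⟩ := exists_Icc_subset_image_eq_of_map_eq hts
      (continuous_toDual.comp_continuousOn (hf.mono (Icc_subset_Icc ht.1 hs.2)))
      (toDual_le_toDual.2 hcd) (congrArg toDual htd) (congrArg toDual hsc)
    refine ⟨p', q', hpq', hsub.trans (Icc_subset_Icc ht.1 hs.2), ?_⟩
    rw [image_comp, Icc_toDual] at himage
    exact toDual.injective.image_injective (himage.trans (toDual.image_eq_preimage_symm _).symm)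

end ExactCover

theorem exists_Icc_image_iterate_eq_of_covers {α : Type*} [ConditionallyCompleteLinearOrder α]
    [TopologicalSpace α] [OrderTopology α] [DenselyOrdered α] {g : α → α} {a b : ℕ → α} (n : ℕ)
    (hab : ∀ i ≤ n, a i ≤ b i) (hg : ∀ i < n, ContinuousOn g (Icc (a i) (b i)))
    (hcov : ∀ i < n, Icc (a (i + 1)) (b (i + 1)) ⊆ g '' Icc (a i) (b i)) :
    ∃ u v, u ≤ v ∧ Icc u v ⊆ Icc (a 0) (b 0) ∧ ContinuousOn g^[n] (Icc u v) ∧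
      g^[n] '' Icc u v = Icc (a n) (b n) ∧ ∀ i ≤ n, MapsTo g^[i] (Icc u v) (Icc (a i) (b i)) := by
  induction n with
  | zero =>
    refine ⟨a 0, b 0, hab 0 le_rfl, subset_rfl, continuousOn_id, image_id _, fun i hi => ?_⟩
    obtain rfl := Nat.le_zero.1 hi
    exact mapsTo_id _
  | succ n ih =>
    obtain ⟨u, v, -, hJ, hcont, himage, hmaps⟩ := ih (fun i hi => hab i (hi.trans n.le_succ))
      (fun i hi => hg i (hi.trans n.lt_succ_self)) (fun i hi => hcov i (hi.trans n.lt_succ_self))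
    have hcont' : ContinuousOn g^[n + 1] (Icc u v) := by
      rw [Function.iterate_succ']
      exact (hg n n.lt_succ_self).comp hcont (hmaps n le_rfl)
    have hcov' : Icc (a (n + 1)) (b (n + 1)) ⊆ g^[n + 1] '' Icc u v := by
      rw [Function.iterate_succ', image_comp, himage]
      exact hcov n n.lt_succ_self
    obtain ⟨u', v', huv', hJ', himage'⟩ := exists_Icc_subset_image_eq hcont' (hab _ le_rfl) hcov'
    refine ⟨u', v', huv', hJ'.trans hJ, hcont'.mono hJ', himage', fun i hi => ?_⟩
    rcases hi.lt_or_eq with hi | rfl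
    · exact (hmaps i (Nat.lt_succ_iff.1 hi)).mono_left hJ'
    · exact himage' ▸ mapsTo_image _ _

theorem loop_periodic_point_general (g : ℝ → ℝ)
    (hg : ContinuousOn g (Icc 0 1))
    (m : ℕ) (a b : ℕ → ℝ)
    (hab : ∀ i ≤ m, a i ≤ b i)
    (hsub : ∀ i ≤ m, Icc (a i) (b i) ⊆ Icc (0:ℝ) 1)
    (hcov : ∀ i < m, Icc (a (i+1)) (b (i+1)) ⊆ g '' Icc (a i) (b i))
    (hloop : Icc (a 0) (b 0) ⊆ Icc (a m) (b m)) :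
    ∃ x ∈ Icc (a 0) (b 0), g^[m] x = x ∧ ∀ i ≤ m, g^[i] x ∈ Icc (a i) (b i) := by
  obtain ⟨u, v, huv, hJ, hcont, himage, hmaps⟩ :=
    exists_Icc_image_iterate_eq_of_covers m hab (fun i hi => hg.mono (hsub i hi.le)) hcov
  obtain ⟨x, hx, hfix⟩ :=
    exists_mem_Icc_isFixedPt_of_surjOn hcont huv (by rw [SurjOn, himage]; exact hJ.trans hloop)
  exact ⟨x, hJ hx, hfix, fun i hi => hmaps i hi hx⟩

theorem loop_periodic_point (g : ℝ → ℝ)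
    (hg : ContinuousOn g (Icc 0 1)) (hmap : MapsTo g (Icc 0 1) (Icc 0 1))
    (m : ℕ) (a b : ℕ → ℝ)
    (hab : ∀ i ≤ m, a i ≤ b i)
    (hsub : ∀ i ≤ m, Icc (a i) (b i) ⊆ Icc (0:ℝ) 1)
    (hcov : ∀ i < m, Icc (a (i+1)) (b (i+1)) ⊆ g '' Icc (a i) (b i))
    (hloop : Icc (a 0) (b 0) ⊆ Icc (a m) (b m)) :
    ∃ x ∈ Icc (a 0) (b 0), g^[m] x = x ∧ ∀ i ≤ m, g^[i] x ∈ Icc (a i) (b i) :=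
  loop_periodic_point_general g hg m a b hab hsub hcov hloop
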